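/- For a real number λ > 0 and integers 0 ≤ k ≤ l, one has ∑_{i=0}^{k} ( i! · C(l,i) ) / ( (λ)_{2i} · (λ+2i+1)_{l-i} ) = 1/(λ)_l − (l−k)_{k+1}/(λ)_{l+k+1}, where (x)_p is the Pochhammer symbol. -/

import Mathlib

/-!
Since `(λ)_{2i} (λ+2i) (λ+2i+1)_{l-i} = (λ)_{l+i+1}` and `i! C(l,i)` is the falling factorial
`l^{(i)} = l (l-1) ⋯ (l-i+1)`, the `i`-th summand equals `l^{(i)} (λ+2i) / (λ)_{l+i+1}`.
Writing `λ + 2i = (λ+l+i) - (l-i)` shows that it is `g i - g (i+1)` with `g i = l^{(i)} / (λ)_{l+i}`,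
so the sum telescopes to `g 0 - g (k+1)`, and `(l-k)_{k+1} = l^{(k+1)}`.
-/

open Finset

/-- Pochhammer (rising factorial) symbol `(x)_p = x (x+1) ⋯ (x+p-1)`. -/
noncomputable def poch (x : ℝ) (p : ℕ) : ℝ := ∏ i ∈ Finset.range p, (x + i)

open Polynomial

lemma poch_add (x : ℝ) (p q : ℕ) : poch x (p + q) = poch x p * poch (x + p) q := by
  simp only [poch, prod_range_add, Nat.cast_add, add_assoc]

lemma poch_succ (x : ℝ) (p : ℕ) : poch x (p + 1) = poch x p * (x + p) := by
  simp only [poch, prod_range_succ]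

lemma poch_pos {x : ℝ} (hx : 0 < x) (p : ℕ) : 0 < poch x p :=
  prod_pos fun i _ => by positivity

lemma poch_sub_natCast_succ (y : ℝ) (k : ℕ) :
    poch (y - k) (k + 1) = (descPochhammer ℝ (k + 1)).eval y := by
  rw [descPochhammer_eval_eq_prod_range, poch, ← prod_range_reflect]
  refine prod_congr rfl fun j hj => ?_
  rw [add_tsub_cancel_right, Nat.cast_sub (Nat.lt_succ_iff.mp (mem_range.mp hj))]
  ring

lemma poch_add_add_one_eq (lam : ℝ) {l i : ℕ} (hil : i ≤ l) :
    poch lam (l + i + 1) = poch lam (2 * i) * (lam + 2 * i) * poch (lam + 2 * i + 1) (l - i) := by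
  rw [show l + i + 1 = 2 * i + 1 + (l - i) by omega, poch_add, poch_succ]
  push_cast
  ring_nf

lemma factorial_mul_choose_div_poch {lam : ℝ} (hlam : 0 < lam) (l i : ℕ) :
    (i.factorial * l.choose i : ℝ) / (poch lam (2 * i) * poch (lam + 2 * i + 1) (l - i)) =
      (descPochhammer ℝ i).eval (l : ℝ) * (lam + 2 * i) / poch lam (l + i + 1) := by
  rcases le_or_gt i l with hil | hli
  · rw [descPochhammer_eval_eq_descFactorial, Nat.descFactorial_eq_factorial_mul_choose,
      poch_add_add_one_eq lam hil, mul_right_comm (poch lam _), Nat.cast_mul,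
      mul_div_mul_right _ _ (by positivity)]
  · simp [Nat.choose_eq_zero_of_lt hli, descPochhammer_eval_coe_nat_of_lt hli]

lemma descPochhammer_div_poch_sub_succ {lam : ℝ} (hlam : 0 < lam) (l i : ℕ) :
    (descPochhammer ℝ i).eval (l : ℝ) / poch lam (l + i) -
        (descPochhammer ℝ (i + 1)).eval (l : ℝ) / poch lam (l + i + 1) =
      (descPochhammer ℝ i).eval (l : ℝ) * (lam + 2 * i) / poch lam (l + i + 1) := by
  have hpoch := (poch_pos hlam (l + i)).ne'
  rw [descPochhammer_succ_eval, poch_succ]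
  field_simp
  push_cast
  ring

theorem stmt3_general (lam : ℝ) (hlam : 0 < lam) (k l : ℕ) :
    ∑ i ∈ Finset.Icc 0 k,
        ((Nat.factorial i : ℝ) * (l.choose i : ℝ)) /
          (poch lam (2 * i) * poch (lam + 2 * i + 1) (l - i)) =
      1 / poch lam l - poch ((l : ℝ) - (k : ℝ)) (k + 1) / poch lam (l + k + 1) := by
  let g : ℕ → ℝ := fun i => (descPochhammer ℝ i).eval (l : ℝ) / poch lam (l + i)
  calc _ = ∑ i ∈ range (k + 1), (g i - g (i + 1)) := by
        rw [← Nat.range_succ_eq_Icc_zero]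
        exact sum_congr rfl fun i _ => (factorial_mul_choose_div_poch hlam l i).trans
          (descPochhammer_div_poch_sub_succ hlam l i).symm
    _ = g 0 - g (k + 1) := sum_range_sub' g (k + 1)
    _ = _ := by
        simp only [g, descPochhammer_zero, eval_one, add_zero, poch_sub_natCast_succ, add_assoc]

theorem stmt3 (lam : ℝ) (hlam : 0 < lam) (k l : ℕ) (hkl : k ≤ l) :
    ∑ i ∈ Finset.Icc 0 k,
        ((Nat.factorial i : ℝ) * (l.choose i : ℝ)) /
          (poch lam (2 * i) * poch (lam + 2 * i + 1) (l - i)) =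
      1 / poch lam l - poch ((l : ℝ) - (k : ℝ)) (k + 1) / poch lam (l + k + 1) :=
  stmt3_general lam hlam k l
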